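/- arXiv:2209.08957 — 4 statements merged into one kernel-verified Lean document; each statement's English description precedes it below -/
import Mathlib

section
/- Define 𝓛(n₁,n₂,k) := n₁ + n₂ + (b-k)·(μ-λ₁-λ₂)/(2μ) on E = ℕ₀ × ℕ₀ × {0,…,b}. For any state (n₁,n₂,k) with n₁ ≥ 1 and 1 ≤ k ≤ s, the generator drift equals λ₁ + p·λ₂ - μ + (μ-λ₁-λ₂)/2 - ((μ-λ₁-λ₂)/2)·(ν/μ), and this quantity is at most -ε, where ε := ((μ-λ₁-λ₂)/2)·min{1, ν/μ}. -/
/-- Lyapunov function 𝓛(n₁,n₂,k) = n₁ + n₂ + (b-k)·(μ-λ₁-λ₂)/(2μ). -/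
noncomputable def Lyap (b : ℕ) (lam1 lam2 mu : ℝ) (n₁ n₂ k : ℕ) : ℝ :=
  (n₁ : ℝ) + n₂ + ((b : ℝ) - k) * (mu - lam1 - lam2) / (2 * mu)

/-- Generator drift Σ_{z̃≠z} q(z;z̃)·(𝓛(z̃)-𝓛(z)) of the queueing-inventory process
applied to the Lyapunov function `Lyap`. -/
noncomputable def drift (b s : ℕ) (lam1 lam2 mu nu p : ℝ) (n₁ n₂ k : ℕ) : ℝ :=
  lam1 * (if 0 < k then 1 else 0) *
      (Lyap b lam1 lam2 mu (n₁ + 1) n₂ k - Lyap b lam1 lam2 mu n₁ n₂ k)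
  + (p * lam2 * (if 0 < k ∧ k ≤ s then 1 else 0) + lam2 * (if s < k then 1 else 0)) *
      (Lyap b lam1 lam2 mu n₁ (n₂ + 1) k - Lyap b lam1 lam2 mu n₁ n₂ k)
  + mu * (if 0 < n₁ then 1 else 0) * (if 0 < k then 1 else 0) *
      (Lyap b lam1 lam2 mu (n₁ - 1) n₂ (k - 1) - Lyap b lam1 lam2 mu n₁ n₂ k)
  + mu * (if n₁ = 0 then 1 else 0) * (if 0 < n₂ then 1 else 0) * (if 0 < k then 1 else 0) *
      (Lyap b lam1 lam2 mu n₁ (n₂ - 1) (k - 1) - Lyap b lam1 lam2 mu n₁ n₂ k)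
  + nu * (if k < b then 1 else 0) *
      (Lyap b lam1 lam2 mu n₁ n₂ (k + 1) - Lyap b lam1 lam2 mu n₁ n₂ k)

theorem stmt_3 (b s : ℕ) (lam1 lam2 mu nu p : ℝ)
    (hb : 2 ≤ b) (hs : 0 < s) (hsb : s < b)
    (h1 : 0 < lam1) (h2 : 0 < lam2) (hmu : 0 < mu) (hnu : 0 < nu)
    (hp0 : 0 ≤ p) (hp1 : p ≤ 1) (hstab : lam1 + lam2 < mu)
    (eps : ℝ) (heps : eps = ((mu - lam1 - lam2) / 2) * min 1 (nu / mu))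
    (n₁ n₂ k : ℕ) (hn₁ : 1 ≤ n₁) (hk1 : 1 ≤ k) (hks : k ≤ s) :
    drift b s lam1 lam2 mu nu p n₁ n₂ k
        = lam1 + p * lam2 - mu + (mu - lam1 - lam2) / 2
          - ((mu - lam1 - lam2) / 2) * (nu / mu) ∧
    lam1 + p * lam2 - mu + (mu - lam1 - lam2) / 2
        - ((mu - lam1 - lam2) / 2) * (nu / mu) ≤ -eps := by
  constructor
  · have hk0 : 0 < k := hk1
    have hkb : k < b := lt_of_le_of_lt hks hsb
    have hn0 : 0 < n₁ := hn₁
    have hn1ne : ¬ n₁ = 0 := Nat.pos_iff_ne_zero.mp hn0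
    have hnsk : ¬ s < k := not_lt.mpr hks
    have hcast1 : ((n₁ - 1 : ℕ) : ℝ) = (n₁ : ℝ) - 1 := by
      rw [Nat.cast_sub hn₁]; norm_num
    have hcast2 : ((k - 1 : ℕ) : ℝ) = (k : ℝ) - 1 := by
      rw [Nat.cast_sub hk1]; norm_num
    simp only [drift, Lyap, hk0, hkb, hn0, hn1ne, hnsk, hks, if_true, if_false,
      and_true, if_pos hk0, hcast1, hcast2, Nat.cast_add, Nat.cast_one]
    have hmu' : mu ≠ 0 := ne_of_gt hmu
    field_simp
    ring
  · have hc : 0 < (mu - lam1 - lam2) / 2 := by linarith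
    have hnm : 0 < nu / mu := div_pos hnu hmu
    have hmin1 : min 1 (nu / mu) ≤ 1 := min_le_left _ _
    have hple : p * lam2 ≤ lam2 := by nlinarith
    have : lam1 + p * lam2 - mu ≤ -(2 * ((mu - lam1 - lam2) / 2)) := by linarith
    rw [heps]
    nlinarith [min_le_right 1 (nu / mu), mul_le_mul_of_nonneg_left hmin1 hc.le]
end

section
/- Let π be a probability measure on E satisfying the partial balance equations P(X₁=n₁,Y>0)·λ₁ = P(X₁=n₁+1,Y>0)·μ for all n₁ ≥ 0, with λ₁ < μ and P(Y>0) > 0. Then the conditional distribution of X₁ given Y > 0 is geometric: P(X₁=n₁ | Y>0) = (1 - λ₁/μ)·(λ₁/μ)^{n₁} for all n₁ ∈ ℕ₀. -/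
theorem eq_mul_pow_of_mul_eq_succ_mul {K : Type*} [Field K] {a : ℕ → K} {l m : K} (hm : m ≠ 0)
    (h : ∀ n, a n * l = a (n + 1) * m) (n : ℕ) : a n = a 0 * (l / m) ^ n := by
  induction n with
  | zero => simp
  | succ n ih =>
    rw [pow_succ, ← mul_assoc, ← ih, mul_div_assoc', h, mul_div_cancel_right₀ _ hm]

theorem div_tsum_eq_of_eq_mul_pow {K : Type*} [NormedField K] [CompleteSpace K] {a : ℕ → K}
    {r : K} (hr : ‖r‖ < 1) (ha : ∀ n, a n = a 0 * r ^ n) (hsum : ∑' k, a k ≠ 0) (n : ℕ) :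
    a n / ∑' k, a k = (1 - r) * r ^ n := by
  have hr1 : 1 - r ≠ 0 := sub_ne_zero.2 fun h => by simp [← h] at hr
  have htsum : ∑' k, a k = a 0 * (1 - r)⁻¹ := by
    rw [tsum_congr ha, tsum_mul_left, tsum_geometric_of_norm_lt_one hr]
  rw [htsum] at hsum ⊢
  rw [ha n]
  field_simp [left_ne_zero_of_mul hsum]

theorem stmt_7_general (lam1 mu : ℝ) (h1 : 0 < lam1) (hmu : 0 < mu)
    (hlm : lam1 < mu)
    (P : ℕ → ℝ)
    (hcut : ∀ n₁ : ℕ, P n₁ * lam1 = P (n₁ + 1) * mu)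
    -- P(Y > 0) := Σ_{n₁ ≥ 0} P(X₁ = n₁, Y > 0), assumed positive
    (PY : ℝ) (hPY : PY = ∑' n₁ : ℕ, P n₁) (hPYpos : 0 < PY) :
    ∀ n₁ : ℕ, P n₁ / PY = (1 - lam1 / mu) * (lam1 / mu) ^ n₁ := by
  have hr : ‖lam1 / mu‖ < 1 := by
    rw [Real.norm_of_nonneg (div_nonneg h1.le hmu.le)]
    exact (div_lt_one hmu).2 hlm
  subst hPY
  exact div_tsum_eq_of_eq_mul_pow hr (eq_mul_pow_of_mul_eq_succ_mul hmu.ne' hcut) hPYpos.ne'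

theorem stmt_7 (b : ℕ) (lam1 mu : ℝ) (h1 : 0 < lam1) (hmu : 0 < mu)
    (hlm : lam1 < mu)
    (pi : ℕ → ℕ → ℕ → ℝ)
    (hnn : ∀ n₁ n₂ k, 0 ≤ pi n₁ n₂ k)
    (hprob : ∑' z : ℕ × ℕ, ∑ k ∈ Finset.range (b + 1), pi z.1 z.2 k = 1)
    (hsum : Summable (fun z : ℕ × ℕ => ∑ k ∈ Finset.range (b + 1), pi z.1 z.2 k))
    -- P(X₁ = n, Y > 0) := Σ_{n₂ ≥ 0} Σ_{k=1}^{b} π(n, n₂, k)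
    (P : ℕ → ℝ)
    (hP : ∀ n, P n = ∑' n₂ : ℕ, ∑ k ∈ Finset.Icc 1 b, pi n n₂ k)
    (hcut : ∀ n₁ : ℕ, P n₁ * lam1 = P (n₁ + 1) * mu)
    -- P(Y > 0) := Σ_{n₁ ≥ 0} P(X₁ = n₁, Y > 0), assumed positive
    (PY : ℝ) (hPY : PY = ∑' n₁ : ℕ, P n₁) (hPYpos : 0 < PY) :
    ∀ n₁ : ℕ, P n₁ / PY = (1 - lam1 / mu) * (lam1 / mu) ^ n₁ :=
  stmt_7_general lam1 mu h1 hmu hlm P hcut PY hPY hPYpos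
end

section
/- Let π be the stationary distribution of the queueing-inventory process Z. Then for every n₂ ∈ ℕ₀: P(X₂=n₂, 0<Y≤s)·p·λ₂ + P(X₂=n₂, Y>s)·λ₂ = P(X₁=0, X₂=n₂+1, Y>0)·μ. -/
/-!
Fix a level `n₂` of the class-2 queue and sum the global balance equations over all states
with `X₂ = n₂`. Transitions inside the level cancel: replenishments shift `k`, class-1 arrivals
and services shift `n₁`, so their terms telescope. What remains says that the class-2 flow out
of level `n₂` (admitted arrivals, and services, which need `n₁ = 0` and `k > 0`) equals the flow
into it from levels `n₂ - 1` and `n₂ + 1`. Induction on `n₂`, starting at level `0` with nothing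
below, turns this into equality of the up- and down-flows across the cut between `n₂` and `n₂ + 1`.
-/

/-- Global balance equations π·Q = 0 of the queueing-inventory process `Z` on
`E = ℕ₀ × ℕ₀ × {0,…,b}` with priority parameter `p`, threshold `s`, base stock `b`. -/
def GlobalBalance (b s : ℕ) (lam1 lam2 mu nu p : ℝ) (pi : ℕ → ℕ → ℕ → ℝ) : Prop :=
  ∀ n₁ n₂ k, k ≤ b →
    pi n₁ n₂ k *
        ((lam1 + p * lam2) * (if 0 < k ∧ k ≤ s then 1 else 0)
          + (lam1 + lam2) * (if s < k then 1 else 0)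
          + mu * (if 0 < n₁ + n₂ then 1 else 0) * (if 0 < k then 1 else 0)
          + nu * (if k < b then 1 else 0))
      = pi (n₁ - 1) n₂ k * lam1 * (if 0 < n₁ then 1 else 0) * (if 0 < k then 1 else 0)
        + pi n₁ (n₂ - 1) k * (p * lam2) * (if 0 < n₂ then 1 else 0) *
            (if 0 < k ∧ k ≤ s then 1 else 0)
        + pi n₁ (n₂ - 1) k * lam2 * (if 0 < n₂ then 1 else 0) * (if s < k then 1 else 0)
        + pi (n₁ + 1) n₂ (k + 1) * mu * (if k < b then 1 else 0)
        + pi n₁ (n₂ + 1) (k + 1) * mu * (if n₁ = 0 then 1 else 0) * (if k < b then 1 else 0)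
        + pi n₁ n₂ (k - 1) * nu * (if 0 < k then 1 else 0)

open Finset

lemma sum_range_shift_eq_sum_Icc (f : ℕ → ℝ) (b : ℕ) :
    ∑ k ∈ range b, f (k + 1) = ∑ k ∈ Icc 1 b, f k := by
  rw [range_eq_Ico, sum_Ico_add']
  rfl

lemma sum_Icc_sub_one_eq_sum_range (f : ℕ → ℝ) (b : ℕ) :
    ∑ k ∈ Icc 1 b, f (k - 1) = ∑ k ∈ range b, f k := by
  simp [← sum_range_shift_eq_sum_Icc]

lemma sum_Icc_one_add_sum_Icc_succ {s b : ℕ} (hsb : s ≤ b) (f : ℕ → ℝ) :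
    ∑ k ∈ Icc 1 s, f k + ∑ k ∈ Icc (s + 1) b, f k = ∑ k ∈ Icc 1 b, f k := by
  rw [← sum_union]
  · congr 1; ext k; simp; omega
  · rw [disjoint_left]; intro k; simp; omega

lemma hasSum_ite_pos_sub_one {f : ℕ → ℝ} {a : ℝ} (hf : HasSum f a) :
    HasSum (fun n => if 0 < n then f (n - 1) else 0) a := by
  rw [← hasSum_nat_add_iff' 1]
  simpa using hf

lemma hasSum_ite_pos_add {f : ℕ → ℝ} {a : ℝ} (hf : HasSum f a) (m : ℕ) :
    HasSum (fun n => if 0 < n + m then f n else 0) (a - if m = 0 then f 0 else 0) := by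
  rw [← hasSum_nat_add_iff' 1]
  rcases Nat.eq_zero_or_pos m with rfl | hm
  · simpa using (hasSum_nat_add_iff' 1).mpr hf
  · simpa [hm, hm.ne', fun n => Nat.add_pos_right n hm] using (hasSum_nat_add_iff' 1).mpr hf

lemma summable_apply_of_summable_sum {ι κ : Type*} {g : ι → κ → ℝ} {t : Finset κ} {k : κ}
    (hg : ∀ i k, 0 ≤ g i k) (h : Summable fun i => ∑ k ∈ t, g i k) (hk : k ∈ t) :
    Summable fun i => g i k :=
  h.of_nonneg_of_le (fun i => hg i k) fun i => single_le_sum (fun j _ => hg i j) hk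

def stockedMass (b : ℕ) (pi : ℕ → ℕ → ℕ → ℝ) (n₁ n₂ : ℕ) : ℝ :=
  ∑ k ∈ Icc 1 b, pi n₁ n₂ k

def class2ArrivalFlux (b s : ℕ) (lam2 p : ℝ) (pi : ℕ → ℕ → ℕ → ℝ) (n₁ n₂ : ℕ) : ℝ :=
  (∑ k ∈ Icc 1 s, pi n₁ n₂ k) * (p * lam2) + (∑ k ∈ Icc (s + 1) b, pi n₁ n₂ k) * lam2

section

variable {b s : ℕ} {lam1 lam2 mu nu p : ℝ} {pi : ℕ → ℕ → ℕ → ℝ}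

theorem GlobalBalance.sum_inventory (hGB : GlobalBalance b s lam1 lam2 mu nu p pi)
    (hsb : s ≤ b) (n₁ m : ℕ) :
    lam1 * stockedMass b pi n₁ m + class2ArrivalFlux b s lam2 p pi n₁ m
        + mu * (if 0 < n₁ + m then stockedMass b pi n₁ m else 0)
      = (if 0 < n₁ then lam1 * stockedMass b pi (n₁ - 1) m else 0)
        + (if 0 < m then class2ArrivalFlux b s lam2 p pi n₁ (m - 1) else 0)
        + mu * stockedMass b pi (n₁ + 1) m
        + (if n₁ = 0 then mu * stockedMass b pi 0 (m + 1) else 0) := by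
  have h := sum_congr rfl fun k hk => hGB n₁ m k (Nat.lt_succ_iff.mp (mem_range.mp hk))
  have hIcc1s : {k ∈ range (b + 1) | 0 < k ∧ k ≤ s} = Icc 1 s := by ext k; simp; omega
  have hIccsb : {k ∈ range (b + 1) | s < k} = Icc (s + 1) b := by ext k; simp; omega
  have hIcc1b : {k ∈ range (b + 1) | 0 < k} = Icc 1 b := by ext k; simp; omega
  have hrange : {k ∈ range (b + 1) | k < b} = range b := by ext k; simp; omega
  simp only [mul_add, sum_add_distrib, mul_ite, mul_one, mul_zero, ← sum_filter, filter_const,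
    hIcc1s, hIccsb, hIcc1b, hrange, ← sum_mul] at h
  rw [sum_range_shift_eq_sum_Icc (pi (n₁ + 1) m), sum_Icc_sub_one_eq_sum_range (pi n₁ m)] at h
  unfold stockedMass class2ArrivalFlux
  split_ifs at h ⊢ <;> subst_vars <;>
    simp only [sum_empty, zero_mul, sum_range_shift_eq_sum_Icc, ← sum_Icc_one_add_sum_Icc_succ hsb]
      at h ⊢ <;>
    linarith

lemma summable_level_slice (hnn : ∀ n₁ n₂ k, 0 ≤ pi n₁ n₂ k)
    (hsum : Summable fun z : ℕ × ℕ => ∑ k ∈ range (b + 1), pi z.1 z.2 k) (m k : ℕ) (hk : k ≤ b) :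
    Summable fun n₁ => pi n₁ m k := by
  have hm := hsum.comp_injective (Prod.mk_left_injective m)
  exact summable_apply_of_summable_sum (g := fun n₁ k => pi n₁ m k) (fun n₁ => hnn n₁ m) hm
    (mem_range.mpr (Nat.lt_succ_of_le hk))

lemma summable_stockedMass (hS : ∀ m k, k ≤ b → Summable fun n₁ => pi n₁ m k) (m : ℕ) :
    Summable fun n₁ => stockedMass b pi n₁ m :=
  summable_sum fun k hk => hS m k (mem_Icc.mp hk).2

lemma hasSum_class2ArrivalFlux (hS : ∀ m k, k ≤ b → Summable fun n₁ => pi n₁ m k)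
    (hsb : s ≤ b) (m : ℕ) :
    HasSum (fun n₁ => class2ArrivalFlux b s lam2 p pi n₁ m)
      ((∑' n₁, ∑ k ∈ Icc 1 s, pi n₁ m k) * (p * lam2)
        + (∑' n₁, ∑ k ∈ Icc (s + 1) b, pi n₁ m k) * lam2) :=
  ((summable_sum fun k hk => hS m k ((mem_Icc.mp hk).2.trans hsb)).hasSum.mul_right _).add
    ((summable_sum fun k hk => hS m k (mem_Icc.mp hk).2).hasSum.mul_right _)

lemma summable_class2ArrivalFlux (hS : ∀ m k, k ≤ b → Summable fun n₁ => pi n₁ m k)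
    (hsb : s ≤ b) (m : ℕ) :
    Summable fun n₁ => class2ArrivalFlux b s lam2 p pi n₁ m :=
  (hasSum_class2ArrivalFlux hS hsb m).summable

theorem GlobalBalance.level_balance (hGB : GlobalBalance b s lam1 lam2 mu nu p pi)
    (hS : ∀ m k, k ≤ b → Summable fun n₁ => pi n₁ m k) (hsb : s ≤ b) (m : ℕ) :
    ∑' n₁, class2ArrivalFlux b s lam2 p pi n₁ m
        + (if 0 < m then mu * stockedMass b pi 0 m else 0)
      = (if 0 < m then ∑' n₁, class2ArrivalFlux b s lam2 p pi n₁ (m - 1) else 0)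
        + mu * stockedMass b pi 0 (m + 1) := by
  have hT := (summable_stockedMass hS m).hasSum
  have hU := (summable_class2ArrivalFlux (lam2 := lam2) (p := p) hS hsb m).hasSum
  have hU' : HasSum (fun n₁ => if 0 < m then class2ArrivalFlux b s lam2 p pi n₁ (m - 1) else 0)
      (if 0 < m then ∑' n₁, class2ArrivalFlux b s lam2 p pi n₁ (m - 1) else 0) := by
    split_ifs
    exacts [(summable_class2ArrivalFlux hS hsb (m - 1)).hasSum, hasSum_zero]
  have hL := ((hT.mul_left lam1).add hU).add ((hasSum_ite_pos_add hT m).mul_left mu)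
  have hR := (((hasSum_ite_pos_sub_one (hT.mul_left lam1)).add hU').add
    (((hasSum_nat_add_iff' 1).mpr hT).mul_left mu)).add
      (hasSum_ite_eq 0 (mu * stockedMass b pi 0 (m + 1)))
  simp only [hGB.sum_inventory hsb] at hL
  have h := hL.unique hR
  rcases Nat.eq_zero_or_pos m with rfl | hm
  · simp only [lt_self_iff_false, ↓reduceIte, add_zero, range_one, sum_singleton, zero_add]
      at h ⊢
    linarith
  · simp only [hm, hm.ne', ↓reduceIte, sub_zero, range_one, sum_singleton] at h ⊢
    linarith

end

theorem stmt_9_general (b s : ℕ) (lam1 lam2 mu nu p : ℝ)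
    (hsb : s < b)
    (pi : ℕ → ℕ → ℕ → ℝ)
    (hnn : ∀ n₁ n₂ k, 0 ≤ pi n₁ n₂ k)
    (hsum : Summable (fun z : ℕ × ℕ => ∑ k ∈ Finset.range (b + 1), pi z.1 z.2 k))
    (hGB : GlobalBalance b s lam1 lam2 mu nu p pi)
    :
    ∀ n₂ : ℕ,
      (∑' n₁ : ℕ, ∑ k ∈ Finset.Icc 1 s, pi n₁ n₂ k) * (p * lam2)
        + (∑' n₁ : ℕ, ∑ k ∈ Finset.Icc (s + 1) b, pi n₁ n₂ k) * lam2
      = (∑ k ∈ Finset.Icc 1 b, pi 0 (n₂ + 1) k) * mu := by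
  have hS := summable_level_slice hnn hsum
  have hflux (m : ℕ) :
      ∑' n₁, class2ArrivalFlux b s lam2 p pi n₁ m = mu * stockedMass b pi 0 (m + 1) := by
    induction m with
    | zero => simpa using hGB.level_balance hS hsb.le 0
    | succ m ih =>
      have h := hGB.level_balance hS hsb.le (m + 1)
      simp only [Nat.succ_pos, if_true, Nat.add_sub_cancel, ih] at h
      linarith
  intro n₂
  rw [← (hasSum_class2ArrivalFlux hS hsb.le n₂).tsum_eq, hflux, stockedMass, mul_comm]

theorem stmt_9 (b s : ℕ) (lam1 lam2 mu nu p : ℝ)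
    (hb : 2 ≤ b) (hs : 0 < s) (hsb : s < b)
    (h1 : 0 < lam1) (h2 : 0 < lam2) (hmu : 0 < mu) (hnu : 0 < nu)
    (hp0 : 0 ≤ p) (hp1 : p ≤ 1)
    (pi : ℕ → ℕ → ℕ → ℝ)
    (hnn : ∀ n₁ n₂ k, 0 ≤ pi n₁ n₂ k)
    (hsum : Summable (fun z : ℕ × ℕ => ∑ k ∈ Finset.range (b + 1), pi z.1 z.2 k))
    (hprob : ∑' z : ℕ × ℕ, ∑ k ∈ Finset.range (b + 1), pi z.1 z.2 k = 1)
    (hGB : GlobalBalance b s lam1 lam2 mu nu p pi)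
    :
    ∀ n₂ : ℕ,
      (∑' n₁ : ℕ, ∑ k ∈ Finset.Icc 1 s, pi n₁ n₂ k) * (p * lam2)
        + (∑' n₁ : ℕ, ∑ k ∈ Finset.Icc (s + 1) b, pi n₁ n₂ k) * lam2
      = (∑ k ∈ Finset.Icc 1 b, pi 0 (n₂ + 1) k) * mu :=
  stmt_9_general b s lam1 lam2 mu nu p hsb pi hnn hsum hGB
end

section
/- Let π be the stationary distribution of the queueing-inventory process Z. Then for every inventory level k ∈ {0,1,…,b-1}: P(Y=k)·ν = P(Y=k+1, X₁+X₂>0)·μ. In particular this relation does not depend on the threshold s, the priority parameter p, or the arrival rates λ₁, λ₂. -/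
private lemma tsum_shift_aux {α β : Type*} (f : α → ℝ) (g : β → ℝ) (i : α → β)
    (hi : Function.Injective i) (h0 : ∀ z, g z ≠ 0 → z ∈ Set.range i)
    (hc : ∀ z, g (i z) = f z) :
    (∑' z, f z = ∑' z, g z) ∧ (Summable f ↔ Summable g) := by
  have hsupp : Function.support g ⊆ Set.range i := fun z hz => h0 z hz
  have hcomp : g ∘ i = f := funext hc
  constructor
  · rw [← hi.tsum_eq hsupp]
    exact tsum_congr fun z => (hc z).symm
  · have := hi.summable_iff (f := g) (fun x hx => by
      by_contra hne; exact hx (h0 x hne))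
    rwa [hcomp] at this

theorem stmt_18 (b s : ℕ) (lam1 lam2 mu nu p : ℝ)
    (hb : 2 ≤ b) (hs : 0 < s) (hsb : s < b)
    (h1 : 0 < lam1) (h2 : 0 < lam2) (hmu : 0 < mu) (hnu : 0 < nu)
    (hp0 : 0 ≤ p) (hp1 : p ≤ 1)
    (pi : ℕ → ℕ → ℕ → ℝ)
    (hnn : ∀ n₁ n₂ k, 0 ≤ pi n₁ n₂ k)
    (hsum : Summable (fun z : ℕ × ℕ => ∑ k ∈ Finset.range (b + 1), pi z.1 z.2 k))
    (hprob : ∑' z : ℕ × ℕ, ∑ k ∈ Finset.range (b + 1), pi z.1 z.2 k = 1)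
    (hGB : GlobalBalance b s lam1 lam2 mu nu p pi)
    :
    ∀ k < b,
      (∑' z : ℕ × ℕ, pi z.1 z.2 k) * nu
        = (∑' z : ℕ × ℕ, if 0 < z.1 + z.2 then pi z.1 z.2 (k + 1) else 0) * mu := by
  have L : ∀ k, k < b →
      mu * (if 0 < k then (1:ℝ) else 0)
          * (∑' z : ℕ × ℕ, if 0 < z.1 + z.2 then pi z.1 z.2 k else 0)
        + nu * (∑' z : ℕ × ℕ, pi z.1 z.2 k)
      = mu * (∑' z : ℕ × ℕ, if 0 < z.1 + z.2 then pi z.1 z.2 (k + 1) else 0)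
        + nu * (if 0 < k then (1:ℝ) else 0) * (∑' z : ℕ × ℕ, pi z.1 z.2 (k - 1)) := by
    intro k hkb
    have key : ∀ n m : ℕ,
      ((lam1 + p * lam2) * (if 0 < k ∧ k ≤ s then (1:ℝ) else 0)
          + (lam1 + lam2) * (if s < k then (1:ℝ) else 0) + nu) * pi n m k
        + (mu * (if 0 < k then (1:ℝ) else 0)) * (if 0 < n + m then pi n m k else 0)
      = (lam1 * (if 0 < k then (1:ℝ) else 0)) * (if 0 < n then pi (n - 1) m k else 0)
        + ((p * lam2 * (if 0 < k ∧ k ≤ s then (1:ℝ) else 0)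
            + lam2 * (if s < k then (1:ℝ) else 0)) * (if 0 < m then pi n (m - 1) k else 0)
        + (mu * pi (n + 1) m (k + 1)
        + (mu * (if n = 0 then pi n (m + 1) (k + 1) else 0)
        + (nu * (if 0 < k then (1:ℝ) else 0)) * pi n m (k - 1)))) := by
      intro n m
      have h := hGB n m k hkb.le
      rw [if_pos hkb] at h
      split_ifs at h ⊢ <;> first | omega | linear_combination h
    -- summability at each level
    have hSle : ∀ j, j ≤ b → Summable (fun z : ℕ × ℕ => pi z.1 z.2 j) := by
      intro j hj
      refine Summable.of_nonneg_of_le (fun z => hnn z.1 z.2 j) (fun z => ?_) hsum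
      exact Finset.single_le_sum (fun i _ => hnn z.1 z.2 i) (Finset.mem_range.mpr (by omega))
    have hSk := hSle k hkb.le
    have hSk1 := hSle (k + 1) (by omega)
    have hSkm := hSle (k - 1) (by omega)
    -- injections
    have hifst : Function.Injective (fun z : ℕ × ℕ => ((z.1 + 1, z.2) : ℕ × ℕ)) := by
      intro a c h; simp only [Prod.mk.injEq] at h
      exact Prod.ext (by omega) h.2
    have hisnd : Function.Injective (fun z : ℕ × ℕ => ((z.1, z.2 + 1) : ℕ × ℕ)) := by
      intro a c h; simp only [Prod.mk.injEq] at h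
      exact Prod.ext h.1 (by omega)
    have hin0 : Function.Injective (fun n : ℕ => ((0, n) : ℕ × ℕ)) := by
      intro a c h; simpa using h
    have hin1 : Function.Injective (fun n : ℕ => ((0, n + 1) : ℕ × ℕ)) := by
      intro a c h; simpa using h
    -- comparison summability
    have hG : Summable (fun z : ℕ × ℕ => if 0 < z.1 + z.2 then pi z.1 z.2 k else 0) := by
      refine Summable.of_nonneg_of_le (fun z => ?_) (fun z => ?_) hSk <;>
        split <;> simp [hnn]
    have hV1 : Summable (fun z : ℕ × ℕ => if 0 < z.1 then pi z.1 z.2 (k + 1) else 0) := by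
      refine Summable.of_nonneg_of_le (fun z => ?_) (fun z => ?_) hSk1 <;>
        split <;> simp [hnn]
    have hV2 : Summable (fun z : ℕ × ℕ => if z.1 = 0 ∧ 0 < z.2 then pi z.1 z.2 (k + 1) else 0) := by
      refine Summable.of_nonneg_of_le (fun z => ?_) (fun z => ?_) hSk1 <;>
        split <;> simp [hnn]
    -- shift identities
    have A1 := tsum_shift_aux (fun z : ℕ × ℕ => pi z.1 z.2 k)
        (fun z : ℕ × ℕ => if 0 < z.1 then pi (z.1 - 1) z.2 k else 0)
        (fun z : ℕ × ℕ => (z.1 + 1, z.2)) hifst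
        (fun z hz => by
          obtain ⟨a, c⟩ := z
          by_cases ha : 0 < a
          · exact ⟨(a - 1, c), by show (a - 1 + 1, c) = (a, c); simp only [Prod.mk.injEq, and_true, true_and]; omega⟩
          · simp [ha] at hz)
        (fun z => by simp)
    have A2 := tsum_shift_aux (fun z : ℕ × ℕ => pi z.1 z.2 k)
        (fun z : ℕ × ℕ => if 0 < z.2 then pi z.1 (z.2 - 1) k else 0)
        (fun z : ℕ × ℕ => (z.1, z.2 + 1)) hisnd
        (fun z hz => by
          obtain ⟨a, c⟩ := z
          by_cases hc : 0 < c
          · exact ⟨(a, c - 1), by show (a, c - 1 + 1) = (a, c); simp only [Prod.mk.injEq, and_true, true_and]; omega⟩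
          · simp [hc] at hz)
        (fun z => by simp)
    have A4 := tsum_shift_aux (fun z : ℕ × ℕ => pi (z.1 + 1) z.2 (k + 1))
        (fun z : ℕ × ℕ => if 0 < z.1 then pi z.1 z.2 (k + 1) else 0)
        (fun z : ℕ × ℕ => (z.1 + 1, z.2)) hifst
        (fun z hz => by
          obtain ⟨a, c⟩ := z
          by_cases ha : 0 < a
          · exact ⟨(a - 1, c), by show (a - 1 + 1, c) = (a, c); simp only [Prod.mk.injEq, and_true, true_and]; omega⟩
          · simp [ha] at hz)
        (fun z => by simp)
    have A5a := tsum_shift_aux (fun n : ℕ => pi 0 (n + 1) (k + 1))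
        (fun z : ℕ × ℕ => if z.1 = 0 then pi z.1 (z.2 + 1) (k + 1) else 0)
        (fun n : ℕ => ((0, n) : ℕ × ℕ)) hin0
        (fun z hz => by
          obtain ⟨a, c⟩ := z
          by_cases ha : a = 0
          · exact ⟨c, by show ((0:ℕ), c) = (a, c); simp only [Prod.mk.injEq, and_true, true_and]; omega⟩
          · simp [ha] at hz)
        (fun n => by simp)
    have A5b := tsum_shift_aux (fun n : ℕ => pi 0 (n + 1) (k + 1))
        (fun z : ℕ × ℕ => if z.1 = 0 ∧ 0 < z.2 then pi z.1 z.2 (k + 1) else 0)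
        (fun n : ℕ => ((0, n + 1) : ℕ × ℕ)) hin1
        (fun z hz => by
          obtain ⟨a, c⟩ := z
          by_cases ha : a = 0 ∧ 0 < c
          · exact ⟨c - 1, by show ((0:ℕ), c - 1 + 1) = (a, c); simp only [Prod.mk.injEq, and_true, true_and]; omega⟩
          · simp [ha] at hz)
        (fun n => by simp)
    have hH1 : Summable (fun z : ℕ × ℕ => if 0 < z.1 then pi (z.1 - 1) z.2 k else 0) :=
      A1.2.mp hSk
    have hH2 : Summable (fun z : ℕ × ℕ => if 0 < z.2 then pi z.1 (z.2 - 1) k else 0) :=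
      A2.2.mp hSk
    have hH4 : Summable (fun z : ℕ × ℕ => pi (z.1 + 1) z.2 (k + 1)) := A4.2.mpr hV1
    have hH5 : Summable (fun z : ℕ × ℕ => if z.1 = 0 then pi z.1 (z.2 + 1) (k + 1) else 0) :=
      A5a.2.mp (A5b.2.mpr hV2)
    -- the summed balance equation
    have hmain :
        (((lam1 + p * lam2) * (if 0 < k ∧ k ≤ s then (1:ℝ) else 0)
            + (lam1 + lam2) * (if s < k then (1:ℝ) else 0) + nu))
            * (∑' z : ℕ × ℕ, pi z.1 z.2 k)
          + (mu * (if 0 < k then (1:ℝ) else 0))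
            * (∑' z : ℕ × ℕ, if 0 < z.1 + z.2 then pi z.1 z.2 k else 0)
        = (lam1 * (if 0 < k then (1:ℝ) else 0)) * (∑' z : ℕ × ℕ, pi z.1 z.2 k)
          + ((p * lam2 * (if 0 < k ∧ k ≤ s then (1:ℝ) else 0)
              + lam2 * (if s < k then (1:ℝ) else 0)) * (∑' z : ℕ × ℕ, pi z.1 z.2 k)
          + (mu * (∑' z : ℕ × ℕ, if 0 < z.1 then pi z.1 z.2 (k + 1) else 0)
          + (mu * (∑' z : ℕ × ℕ, if z.1 = 0 ∧ 0 < z.2 then pi z.1 z.2 (k + 1) else 0)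
          + (nu * (if 0 < k then (1:ℝ) else 0)) * (∑' z : ℕ × ℕ, pi z.1 z.2 (k - 1))))) := by
      have e0 : (∑' z : ℕ × ℕ,
          (((lam1 + p * lam2) * (if 0 < k ∧ k ≤ s then (1:ℝ) else 0)
            + (lam1 + lam2) * (if s < k then (1:ℝ) else 0) + nu) * pi z.1 z.2 k
          + (mu * (if 0 < k then (1:ℝ) else 0)) * (if 0 < z.1 + z.2 then pi z.1 z.2 k else 0)))
        = ∑' z : ℕ × ℕ,
          ((lam1 * (if 0 < k then (1:ℝ) else 0)) * (if 0 < z.1 then pi (z.1 - 1) z.2 k else 0)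
          + ((p * lam2 * (if 0 < k ∧ k ≤ s then (1:ℝ) else 0)
              + lam2 * (if s < k then (1:ℝ) else 0)) * (if 0 < z.2 then pi z.1 (z.2 - 1) k else 0)
          + (mu * pi (z.1 + 1) z.2 (k + 1)
          + (mu * (if z.1 = 0 then pi z.1 (z.2 + 1) (k + 1) else 0)
          + (nu * (if 0 < k then (1:ℝ) else 0)) * pi z.1 z.2 (k - 1))))) :=
        tsum_congr fun z => key z.1 z.2
      rw [Summable.tsum_add (hSk.mul_left _) (hG.mul_left _), tsum_mul_left, tsum_mul_left,
          Summable.tsum_add (hH1.mul_left _) ((hH2.mul_left _).add ((hH4.mul_left _).add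
            ((hH5.mul_left _).add (hSkm.mul_left _)))),
          Summable.tsum_add (hH2.mul_left _) ((hH4.mul_left _).add ((hH5.mul_left _).add
            (hSkm.mul_left _))),
          Summable.tsum_add (hH4.mul_left _) ((hH5.mul_left _).add (hSkm.mul_left _)),
          Summable.tsum_add (hH5.mul_left _) (hSkm.mul_left _),
          tsum_mul_left, tsum_mul_left, tsum_mul_left, tsum_mul_left, tsum_mul_left] at e0
      rw [← A1.1, ← A2.1, A4.1, A5a.1.symm.trans A5b.1] at e0
      exact e0
    -- split U(k+1)
    have eU : (∑' z : ℕ × ℕ, if 0 < z.1 + z.2 then pi z.1 z.2 (k + 1) else 0)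
        = (∑' z : ℕ × ℕ, if 0 < z.1 then pi z.1 z.2 (k + 1) else 0)
          + (∑' z : ℕ × ℕ, if z.1 = 0 ∧ 0 < z.2 then pi z.1 z.2 (k + 1) else 0) := by
      rw [← Summable.tsum_add hV1 hV2]
      refine tsum_congr fun z => ?_
      obtain ⟨a, c⟩ := z
      rcases Nat.eq_zero_or_pos a with ha | ha <;> rcases Nat.eq_zero_or_pos c with hc | hc <;>
        simp [ha, hc] <;> omega
    have hcsplit : (if 0 < k then (1:ℝ) else 0)
        = (if 0 < k ∧ k ≤ s then (1:ℝ) else 0) + (if s < k then (1:ℝ) else 0) := by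
      split_ifs <;> first | (exfalso; omega) | norm_num
    set Sk := ∑' z : ℕ × ℕ, pi z.1 z.2 k
    set Skm := ∑' z : ℕ × ℕ, pi z.1 z.2 (k - 1)
    set Uk := ∑' z : ℕ × ℕ, if 0 < z.1 + z.2 then pi z.1 z.2 k else 0
    set V1 := ∑' z : ℕ × ℕ, if 0 < z.1 then pi z.1 z.2 (k + 1) else 0
    set V2 := ∑' z : ℕ × ℕ, if z.1 = 0 ∧ 0 < z.2 then pi z.1 z.2 (k + 1) else 0
    rw [eU]
    linear_combination hmain + lam1 * Sk * hcsplit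
  intro k hk
  induction k with
  | zero =>
    have h0 := L 0 (by omega)
    rw [if_neg (lt_irrefl 0)] at h0
    linear_combination h0
  | succ n ih =>
    have hn : n < b := by omega
    have hprev := ih hn
    have hstep := L (n + 1) hk
    rw [if_pos (Nat.succ_pos n), Nat.add_sub_cancel] at hstep
    linear_combination hstep + hprev
end
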